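/- Fix τ ∈ ℍ with E6(τ) ≠ 0 and regard C₁ = −12·Δ·K/E6, C₂ = E4²·Δ·K²/(4E6²) − E6·L/24 + E4·M/24, D₂ = −E4·Δ·K²/(24E6) − E4²·L/288 + E6·M/288, D₃ = 2Δ²·K³/E6² + E4·Δ·K·L/(4E6) + Δ·N/4 as elements of the polynomial ring ℂ[K,L,M,N] in four formal variables K, L, M, N (with Δ = Δ(τ), E4 = E4(τ), E6 = E6(τ)). Then the determinant of the 4×4 Jacobian matrix whose (i,j) entry is the formal partial derivative of the i-th polynomial among (C₁,C₂,D₂,D₃) with respect to the j-th variable among (K,L,M,N) is the constant polynomial −3·Δ(τ)³/(4·E6(τ)). -/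

import Mathlib

open MvPolynomial Complex

/-- `q = e^{2πiτ}` -/
noncomputable def qc (τ : ℂ) : ℂ := Complex.exp (2 * Real.pi * Complex.I * τ)

/-- `E4(τ) = 1 + 240·Σ_{n≥1} n³qⁿ/(1−qⁿ)` -/
noncomputable def E4 (τ : ℂ) : ℂ :=
  1 + 240 * ∑' n : ℕ, ((n : ℂ) + 1) ^ 3 * qc τ ^ (n + 1) / (1 - qc τ ^ (n + 1))

/-- `E6(τ) = 1 − 504·Σ_{n≥1} n⁵qⁿ/(1−qⁿ)` -/
noncomputable def E6 (τ : ℂ) : ℂ :=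
  1 - 504 * ∑' n : ℕ, ((n : ℂ) + 1) ^ 5 * qc τ ^ (n + 1) / (1 - qc τ ^ (n + 1))

/-- `Δ = (E4³ − E6²)/1728` -/
noncomputable def Δf (τ : ℂ) : ℂ := (E4 τ ^ 3 - E6 τ ^ 2) / 1728

/-- `C₁ = −12·Δ·K/E6` in `ℂ[K,L,M,N]`, variables `X 0 = K, X 1 = L, X 2 = M, X 3 = N`. -/
noncomputable def C1p (τ : ℂ) : MvPolynomial (Fin 4) ℂ := C (-12 * Δf τ / E6 τ) * X 0

/-- `C₂ = E4²·Δ·K²/(4E6²) − E6·L/24 + E4·M/24` -/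
noncomputable def C2p (τ : ℂ) : MvPolynomial (Fin 4) ℂ :=
  C (E4 τ ^ 2 * Δf τ / (4 * E6 τ ^ 2)) * X 0 ^ 2 - C (E6 τ / 24) * X 1 + C (E4 τ / 24) * X 2

/-- `D₂ = −E4·Δ·K²/(24E6) − E4²·L/288 + E6·M/288` -/
noncomputable def D2p (τ : ℂ) : MvPolynomial (Fin 4) ℂ :=
  -(C (E4 τ * Δf τ / (24 * E6 τ))) * X 0 ^ 2 - C (E4 τ ^ 2 / 288) * X 1 + C (E6 τ / 288) * X 2

/-- `D₃ = 2Δ²·K³/E6² + E4·Δ·K·L/(4E6) + Δ·N/4` -/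
noncomputable def D3p (τ : ℂ) : MvPolynomial (Fin 4) ℂ :=
  C (2 * Δf τ ^ 2 / E6 τ ^ 2) * X 0 ^ 3 + C (E4 τ * Δf τ / (4 * E6 τ)) * (X 0 * X 1) +
    C (Δf τ / 4) * X 3


/-!
The Jacobian is block lower triangular: `C₁` involves only `K`, and only `D₃` involves `N`.
Its determinant is therefore `∂C₁/∂K · m · ∂D₃/∂N`, where `m` is the `2 × 2` minor of `(C₂, D₂)`
in `(L, M)`, and `m = (E4³ - E6²)/6912 = Δ/4`.
-/

theorem Matrix.det_fin_four_of_block_lower_triangular {R : Type*} [CommRing R]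
    (M : Matrix (Fin 4) (Fin 4) R) (h01 : M 0 1 = 0) (h02 : M 0 2 = 0) (h03 : M 0 3 = 0)
    (h13 : M 1 3 = 0) (h23 : M 2 3 = 0) :
    M.det = M 0 0 * (M 1 1 * M 2 2 - M 1 2 * M 2 1) * M 3 3 := by
  rw [Matrix.det_succ_row_zero, Fin.sum_univ_four, h01, h02, h03, Matrix.det_fin_three]
  simp only [Matrix.submatrix_apply, Fin.succAbove_zero, Fin.succ_zero_eq_one, Fin.succ_one_eq_two,
    Fin.reduceSucc, Fin.val_zero, h13, h23]
  ring

theorem stmt_9_general (τ : ℂ) :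
    (Matrix.of fun i j : Fin 4 => MvPolynomial.pderiv j (![C1p τ, C2p τ, D2p τ, D3p τ] i)).det
      = C (-3 * Δf τ ^ 3 / (4 * E6 τ)) := by
  have minor : -(E6 τ / 24 * (E6 τ / 288)) + E4 τ / 24 * (E4 τ ^ 2 / 288) = Δf τ / 4 := by
    rw [Δf]; ring
  rw [Matrix.det_fin_four_of_block_lower_triangular] <;> simp [C1p, C2p, D2p, D3p, pderiv_X]
  simp only [← map_mul, ← map_neg, ← map_add, minor]
  congr 1
  ring

/-- The formal Jacobian determinant of `(C₁,C₂,D₂,D₃)` w.r.t. `(K,L,M,N)` is the constant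
polynomial `−3·Δ(τ)³/(4·E6(τ))`. -/
theorem stmt_9 (τ : ℂ) (hτ : 0 < τ.im) (hE6 : E6 τ ≠ 0) :
    (Matrix.of fun i j : Fin 4 => MvPolynomial.pderiv j (![C1p τ, C2p τ, D2p τ, D3p τ] i)).det
      = C (-3 * Δf τ ^ 3 / (4 * E6 τ)) :=
  stmt_9_general τ
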